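/- (Stechkin estimate) Let 0 < q < p < ∞, let N ∈ ℕ, s ≥ 1, and let x ∈ ℝ^N. Then the best s-term approximation error satisfies σ_s(x)_p ≤ s^{1/p − 1/q}·‖x‖_q, where ‖x‖_q = (Σ_j |x_j|^q)^{1/q}. -/

import Mathlib

/-!
Keep the entries with `|x_j|^q > ‖x‖_q^q / s`; by Markov's inequality there are at most `s` of
them. Every other entry has `|x_j|^q ≤ ‖x‖_q^q / s`, hence
`|x_j|^p ≤ (‖x‖_q^q / s)^((p-q)/q) |x_j|^q`, and summing over the discarded entries gives
`σ_s(x)_p^p ≤ s^(-(p-q)/q) ‖x‖_q^p`.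
-/

open MeasureTheory Finset Real

noncomputable section

/-- The `ℓ_p` (quasi-)norm of a vector `x ∈ ℝ^N`. -/
def lpNorm {N : ℕ} (p : ℝ) (x : Fin N → ℝ) : ℝ :=
  (∑ j, |x j| ^ p) ^ (1 / p)

/-- A vector is `s`-sparse if it has at most `s` nonzero entries. -/
def IsSparse {N : ℕ} (s : ℕ) (y : Fin N → ℝ) : Prop :=
  ∃ T : Finset (Fin N), T.card ≤ s ∧ ∀ j ∉ T, y j = 0

/-- Error of best `s`-term approximation in the `ℓ_p` (quasi-)norm. -/
def bestApprox {N : ℕ} (s : ℕ) (p : ℝ) (x : Fin N → ℝ) : ℝ :=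
  sInf { t | ∃ y : Fin N → ℝ, IsSparse s y ∧ t = lpNorm p (x - y) }

lemma lpNorm_nonneg {N : ℕ} (p : ℝ) (x : Fin N → ℝ) : 0 ≤ lpNorm p x :=
  rpow_nonneg (sum_nonneg fun _ _ => rpow_nonneg (abs_nonneg _) _) _

lemma bestApprox_le {N s : ℕ} {p : ℝ} {x y : Fin N → ℝ} (hy : IsSparse s y) :
    bestApprox s p x ≤ lpNorm p (x - y) :=
  csInf_le ⟨0, fun _ ⟨_, _, ht⟩ => ht ▸ lpNorm_nonneg _ _⟩ ⟨y, hy, rfl⟩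

lemma card_filter_sum_div_lt_le {ι : Type*} [Fintype ι] {f : ι → ℝ} (hf : ∀ i, 0 ≤ f i)
    {s : ℕ} (hs : 0 < s) : #{j | (∑ i, f i) / s < f j} ≤ s := by
  set B := ∑ i, f i
  set T : Finset ι := {j | B / s < f j}
  have hs' : (0 : ℝ) < s := by exact_mod_cast hs
  rcases T.eq_empty_or_nonempty with hT | ⟨j, hj⟩
  · simp [hT]
  have hBpos : 0 < B :=
    calc 0 ≤ B / s := div_nonneg (sum_nonneg fun i _ => hf i) hs'.le
      _ < f j := (mem_filter.mp hj).2
      _ ≤ B := single_le_sum (fun i _ => hf i) (mem_univ j)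
  have hcard : (T.card : ℝ) * (B / s) ≤ B :=
    calc (T.card : ℝ) * (B / s) = ∑ _j ∈ T, B / s := by rw [sum_const, nsmul_eq_mul]
      _ ≤ ∑ j ∈ T, f j := sum_le_sum fun j hj => (mem_filter.mp hj).2.le
      _ ≤ B := sum_le_sum_of_subset_of_nonneg (subset_univ T) fun i _ _ => hf i
  rw [mul_div_assoc', div_le_iff₀ hs', mul_comm B] at hcard
  exact_mod_cast le_of_mul_le_mul_right hcard hBpos

lemma rpow_le_rpow_mul_rpow_of_rpow_le {a m p q : ℝ} (ha : 0 ≤ a) (hq : 0 < q) (hqp : q ≤ p)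
    (ham : a ^ q ≤ m) : a ^ p ≤ m ^ ((p - q) / q) * a ^ q := by
  have hsplit : a ^ p = (a ^ q) ^ ((p - q) / q) * a ^ q := by
    rw [← rpow_mul ha, mul_div_cancel₀ _ hq.ne', ← rpow_add' ha (by linarith), sub_add_cancel]
  rw [hsplit]
  gcongr

lemma div_rpow_mul_self_rpow_one_div {B s p q : ℝ} (hB : 0 ≤ B) (hs : 0 < s) (hp : p ≠ 0)
    (hq : q ≠ 0) : ((B / s) ^ ((p - q) / q) * B) ^ (1 / p) = s ^ (1 / p - 1 / q) * B ^ (1 / q) := by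
  have hexp : (p - q) / q + 1 ≠ 0 := by rw [div_add_one hq]; simp [hp, hq]
  rw [div_rpow hB hs.le, div_mul_eq_mul_div, ← rpow_add_one' hB hexp,
    div_rpow (by positivity) (by positivity), ← rpow_mul hB, ← rpow_mul hs.le, div_eq_mul_inv, ← rpow_neg hs.le, mul_comm]
  congr 2 <;> field_simp <;> ring

/-- **Stechkin estimate**: for `0 < q < p < ∞` and `s ≥ 1`,
`σ_s(x)_p ≤ s^{1/p - 1/q} ‖x‖_q`. -/
theorem stechkin_estimate (p q : ℝ) (hq : 0 < q) (hqp : q < p)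
    (N s : ℕ) (hs : 1 ≤ s) (x : Fin N → ℝ) :
    bestApprox s p x ≤ (s : ℝ) ^ (1 / p - 1 / q) * lpNorm q x := by
  set B := ∑ j, |x j| ^ q
  have hB : 0 ≤ B := sum_nonneg fun j _ => rpow_nonneg (abs_nonneg _) _
  have hs' : (0 : ℝ) < s := by exact_mod_cast hs
  set z : Fin N → ℝ := fun j => if |x j| ^ q ≤ B / s then x j else 0
  have hsparse : IsSparse s (x - z) := by
    refine ⟨({j | B / s < |x j| ^ q} : Finset _),
      card_filter_sum_div_lt_le (fun j => rpow_nonneg (abs_nonneg _) _) hs, fun j hj => ?_⟩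
    have hj : |x j| ^ q ≤ B / s := not_lt.mp (by simpa using hj)
    simp [z, hj]
  have htail : ∑ j, |z j| ^ p ≤ (B / s) ^ ((p - q) / q) * B := by
    rw [mul_sum]
    refine sum_le_sum fun j _ => ?_
    by_cases hj : |x j| ^ q ≤ B / s
    · simpa [z, hj] using rpow_le_rpow_mul_rpow_of_rpow_le (abs_nonneg (x j)) hq hqp.le hj
    · simp only [z, hj, if_false, abs_zero, zero_rpow (hq.trans hqp).ne']
      positivity
  calc bestApprox s p x ≤ lpNorm p z := sub_sub_cancel x z ▸ bestApprox_le hsparse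
    _ ≤ ((B / s) ^ ((p - q) / q) * B) ^ (1 / p) :=
      rpow_le_rpow (sum_nonneg fun _ _ => rpow_nonneg (abs_nonneg _) _) htail
        (one_div_nonneg.mpr (hq.trans hqp).le)
    _ = (s : ℝ) ^ (1 / p - 1 / q) * lpNorm q x :=
      div_rpow_mul_self_rpow_one_div hB hs' (hq.trans hqp).ne' hq.ne'
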